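/- Let K be a nonempty compact subset of ℝᴺ, let f : K × ℝ → ℝ be continuous, and define F(x,u) := ∫₀ᵘ f(x,s) ds. Assume there exists μ > 4 such that 0 < μ F(x,u) ≤ u f(x,u) for all u ≠ 0 and all x ∈ K. Then there exist constants c₁ > 0 and c₂ > 0 such that F(x,u) ≥ c₁|u|^μ − c₂ for all (x,u) ∈ K × ℝ. -/

import Mathlib

/-!
Along a ray, (f₃) says `(log F)' ≥ μ / u`, i.e. `u ↦ F(x, u) u^{-μ}` is nondecreasing on
`u > 0`, so `F(x, u) ≥ F(x, 1) u^μ` for `u ≥ 1`, and symmetrically for `u ≤ -1` with `F(x, -1)`.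
The functions `x ↦ F(x, ±1)` are continuous and positive on the compact set `K`, hence bounded
below by some `c > 0`. On `|u| ≤ 1` the bound `F ≥ c |u|^μ - c` holds because `F ≥ 0`.
-/

open Metric Set Filter Topology intervalIntegral

theorem ContinuousOn.intervalIntegral_of_prod_univ {X E : Type*} [TopologicalSpace X]
    [NormedAddCommGroup E] [NormedSpace ℝ E] {K : Set X} {f : X → ℝ → E}
    (hf : ContinuousOn (fun p : X × ℝ => f p.1 p.2) (K ×ˢ univ)) (a b : ℝ) :
    ContinuousOn (fun x => ∫ t in a..b, f x t) K := by
  rw [continuousOn_iff_continuous_domRestrict]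
  have hK : Continuous (fun p : K × ℝ => f p.1 p.2) :=
    hf.comp_continuous (continuous_subtype_val.prodMap continuous_id)
      fun p => ⟨p.1.2, trivial⟩
  exact continuous_parametric_intervalIntegral_of_continuous' (f := fun (x : K) t => f x t) hK a b

theorem monotoneOn_mul_rpow_neg_of_mul_le_mul_deriv {μ : ℝ} {φ ψ : ℝ → ℝ}
    (hd : ∀ v, 0 < v → HasDerivAt φ (ψ v) v) (hAR : ∀ v, 0 < v → μ * φ v ≤ v * ψ v) :
    MonotoneOn (fun v => φ v * v ^ (-μ)) (Ioi 0) := by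
  have hderiv : ∀ v ∈ Ioi (0 : ℝ), HasDerivAt (fun v => φ v * v ^ (-μ))
      (v ^ (-μ - 1) * (v * ψ v - μ * φ v)) v := by
    intro v (hv : 0 < v)
    refine ((hd v hv).mul (Real.hasDerivAt_rpow_const (Or.inl hv.ne'))).congr_deriv ?_
    rw [show v ^ (-μ) = v ^ (-μ - 1) * v by rw [← Real.rpow_add_one hv.ne']; ring_nf]
    ring
  refine monotoneOn_of_deriv_nonneg (convex_Ioi 0)
    (fun v hv => (hderiv v hv).continuousAt.continuousWithinAt)
    (fun v hv => (hderiv v (interior_subset hv)).differentiableAt.differentiableWithinAt)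
    fun v hv => ?_
  rw [interior_Ioi] at hv
  rw [(hderiv v hv).deriv]
  exact mul_nonneg (Real.rpow_nonneg hv.le _) (sub_nonneg.2 (hAR v hv))

theorem mul_rpow_le_of_mul_le_mul_deriv {μ : ℝ} {φ ψ : ℝ → ℝ}
    (hd : ∀ v, 0 < v → HasDerivAt φ (ψ v) v) (hAR : ∀ v, 0 < v → μ * φ v ≤ v * ψ v)
    {v : ℝ} (hv : 1 ≤ v) : φ 1 * v ^ μ ≤ φ v := by
  have hv0 : 0 < v := one_pos.trans_le hv
  have hmono := monotoneOn_mul_rpow_neg_of_mul_le_mul_deriv hd hAR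
    (mem_Ioi.2 one_pos) (mem_Ioi.2 hv0) hv
  simp only [Real.one_rpow, mul_one] at hmono
  calc φ 1 * v ^ μ ≤ φ v * v ^ (-μ) * v ^ μ := by gcongr
    _ = φ v := by rw [mul_assoc, ← Real.rpow_add hv0, neg_add_cancel, Real.rpow_zero, mul_one]

theorem min_mul_abs_rpow_le_of_mul_le_mul_deriv {μ : ℝ} {φ ψ : ℝ → ℝ}
    (hd : ∀ v, v ≠ 0 → HasDerivAt φ (ψ v) v) (hAR : ∀ v, v ≠ 0 → μ * φ v ≤ v * ψ v)
    {u : ℝ} (hu : 1 ≤ |u|) : min (φ 1) (φ (-1)) * |u| ^ μ ≤ φ u := by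
  rcases le_or_gt 0 u with hu0 | hu0
  · rw [abs_of_nonneg hu0] at hu ⊢
    calc min (φ 1) (φ (-1)) * u ^ μ ≤ φ 1 * u ^ μ := by gcongr; exact min_le_left _ _
      _ ≤ φ u := mul_rpow_le_of_mul_le_mul_deriv (fun v hv => hd v hv.ne')
          (fun v hv => hAR v hv.ne') hu
  · rw [abs_of_neg hu0] at hu ⊢
    have hreflect := mul_rpow_le_of_mul_le_mul_deriv (φ := fun v => φ (-v))
      (ψ := fun v => -ψ (-v))
      (fun v hv => ((hd (-v) (neg_ne_zero.2 hv.ne')).comp v (hasDerivAt_neg v)).congr_deriv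
        (by ring))
      (fun v hv => (hAR (-v) (neg_ne_zero.2 hv.ne')).trans_eq (by ring)) hu
    simp only [neg_neg] at hreflect
    calc min (φ 1) (φ (-1)) * (-u) ^ μ ≤ φ (-1) * (-u) ^ μ := by gcongr; exact min_le_right _ _
      _ ≤ φ u := hreflect

theorem AR_growth_estimate_general
    {N : ℕ} (K : Set (EuclideanSpace ℝ (Fin N)))
    (hKcpt : IsCompact K)
    (f : EuclideanSpace ℝ (Fin N) → ℝ → ℝ)
    (hfcont : ContinuousOn (fun p : EuclideanSpace ℝ (Fin N) × ℝ => f p.1 p.2)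
      (K ×ˢ univ))
    (F : EuclideanSpace ℝ (Fin N) → ℝ → ℝ)
    (hF : ∀ x u, F x u = ∫ s in (0 : ℝ)..u, f x s)
    (μ : ℝ) (hμ : 4 < μ)
    (hAR : ∀ x ∈ K, ∀ u : ℝ, u ≠ 0 →
      0 < μ * F x u ∧ μ * F x u ≤ u * f x u) :
    ∃ c₁ : ℝ, 0 < c₁ ∧ ∃ c₂ : ℝ, 0 < c₂ ∧
      ∀ x ∈ K, ∀ u : ℝ, c₁ * |u| ^ μ - c₂ ≤ F x u := by
  have hμ0 : 0 < μ := by linarith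
  have hFpos : ∀ x ∈ K, ∀ u, u ≠ 0 → 0 < F x u := fun x hx u hu =>
    pos_of_mul_pos_right (hAR x hx u hu).1 hμ0.le
  have hFnonneg : ∀ x ∈ K, ∀ u, 0 ≤ F x u := fun x hx u => by
    rcases eq_or_ne u 0 with rfl | hu
    · simp [hF]
    · exact (hFpos x hx u hu).le
  have hderiv : ∀ x ∈ K, ∀ u, HasDerivAt (F x) (f x u) u := fun x hx u => by
    rw [show F x = fun u => ∫ s in (0 : ℝ)..u, f x s from funext (hF x)]
    exact (hfcont.comp_continuous (continuous_const.prodMk continuous_id)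
      fun _ => ⟨hx, trivial⟩).integral_hasStrictDerivAt 0 u |>.hasDerivAt
  obtain ⟨c, hc, hcle⟩ := hKcpt.exists_forall_le' (a := 0)
    ((ContinuousOn.inf (hfcont.intervalIntegral_of_prod_univ 0 1)
      (hfcont.intervalIntegral_of_prod_univ 0 (-1))).congr fun x _ => by simp only [hF])
    fun x hx => lt_min (hFpos x hx 1 one_ne_zero) (hFpos x hx (-1) (by norm_num))
  refine ⟨c, hc, c, hc, fun x hx u => ?_⟩
  rcases le_or_gt |u| 1 with hu | hu
  · have : c * |u| ^ μ ≤ c := mul_le_of_le_one_right hc.le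
      (Real.rpow_le_one (abs_nonneg u) hu hμ0.le)
    linarith [hFnonneg x hx u]
  · calc c * |u| ^ μ - c ≤ min (F x 1) (F x (-1)) * |u| ^ μ :=
          (sub_le_self _ hc.le).trans (by gcongr; exact hcle x hx)
      _ ≤ F x u := min_mul_abs_rpow_le_of_mul_le_mul_deriv (fun v _ => hderiv x hx v)
          (fun v hv => (hAR x hx v hv).2) hu.le

/-- Superquadratic growth of the primitive `F` under the Ambrosetti–Rabinowitz
condition (f₃). -/
theorem AR_growth_estimate
    {N : ℕ} (K : Set (EuclideanSpace ℝ (Fin N)))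
    (hKne : K.Nonempty) (hKcpt : IsCompact K)
    (f : EuclideanSpace ℝ (Fin N) → ℝ → ℝ)
    (hfcont : ContinuousOn (fun p : EuclideanSpace ℝ (Fin N) × ℝ => f p.1 p.2)
      (K ×ˢ univ))
    (F : EuclideanSpace ℝ (Fin N) → ℝ → ℝ)
    (hF : ∀ x u, F x u = ∫ s in (0 : ℝ)..u, f x s)
    (μ : ℝ) (hμ : 4 < μ)
    (hAR : ∀ x ∈ K, ∀ u : ℝ, u ≠ 0 →
      0 < μ * F x u ∧ μ * F x u ≤ u * f x u) :
    ∃ c₁ : ℝ, 0 < c₁ ∧ ∃ c₂ : ℝ, 0 < c₂ ∧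
      ∀ x ∈ K, ∀ u : ℝ, c₁ * |u| ^ μ - c₂ ≤ F x u :=
  AR_growth_estimate_general K hKcpt f hfcont F hF μ hμ hAR
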